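/- Let n ≥ 3, and let (p₁,…,p_k) with 1 ≤ p₁ < ⋯ < p_k ≤ n be such that the set Ṡ of subsequences (q₁,…,q_t) with q_{i+1} − q_i ≠ 2 for all i and q_t − q₁ ≠ n−2 is nonempty. If q = (q₁,…,q_t) ∈ Ṡ and r is an entry of (p₁,…,p_k) with r > q_t, r − q_t ≠ 2, and r − q₁ ≠ n − 2, then (q₁,…,q_t,r) ∈ Ṡ and, with weights w_v ≥ 2 at all positions p_i, Σ(q₁,…,q_t) + ⌊(n+q₁−q_t)/3⌋ ≤ Σ(q₁,…,q_t,r) + ⌊(n+q₁−r)/3⌋, where Σ is the weight-position sum Σ(q) = Σ w_{q_i} + Σ ⌊(q_{i+1}−q_i)/3⌋ − t. -/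

import Mathlib

/-- The weight-position sum `Σq = Σᵢ w_{qᵢ} + Σᵢ ⌊(q_{i+1}-q_i)/3⌋ - t`. -/
def wps (w : ℕ → ℕ) (l : List ℕ) : ℤ :=
  (l.map fun v => (w v : ℤ)).sum
    + ((l.zip l.tail).map fun pr => (((pr.2 - pr.1) / 3 : ℕ) : ℤ)).sum
    - l.length

lemma wps_single (w : ℕ → ℕ) (a : ℕ) : wps w [a] = (w a : ℤ) - 1 := by
  simp [wps]

lemma wps_cons_cons (w : ℕ → ℕ) (a b : ℕ) (l : List ℕ) :
    wps w (a :: b :: l) = (w a : ℤ) + (((b - a) / 3 : ℕ) : ℤ) - 1 + wps w (b :: l) := by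
  simp [wps]; ring

lemma wps_append_right (w : ℕ → ℕ) (r : ℕ) :
    ∀ (q : List ℕ) (h : q ≠ []),
      wps w (q ++ [r]) = wps w q + (w r : ℤ) + (((r - q.getLast h) / 3 : ℕ) : ℤ) - 1
  | [], h => absurd rfl h
  | [a], _ => by
      rw [List.singleton_append, wps_cons_cons, wps_single, wps_single]
      simp [List.getLast]; ring
  | a :: b :: l, _ => by
      show wps w (a :: b :: (l ++ [r])) = _
      have h2 := wps_append_right w r (b :: l) (by simp)
      simp only [List.cons_append] at h2
      rw [wps_cons_cons, h2, wps_cons_cons]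
      simp [List.getLast]
      ring

lemma le_getLast_of_sorted : ∀ {l : List ℕ} (h : l ≠ []), l.Pairwise (· < ·) →
    ∀ x ∈ l, x ≤ l.getLast h
  | [], h => absurd rfl h
  | [a], _ => by simp
  | a :: b :: l, _ => by
      intro hs x hx
      rw [List.getLast_cons (by simp : (b :: l) ≠ [])]
      rcases List.mem_cons.1 hx with rfl | hx'
      · have hab : x < b := (List.pairwise_cons.1 hs).1 b (by simp)
        have := le_getLast_of_sorted (l := b :: l) (by simp) (List.pairwise_cons.1 hs).2 b (by simp)
        omega
      · exact le_getLast_of_sorted (by simp) (List.pairwise_cons.1 hs).2 x hx'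

lemma sublist_append_last : ∀ {p q : List ℕ} {r : ℕ}, p.Pairwise (· < ·) →
    q.Sublist p → r ∈ p → (∀ x ∈ q, x < r) → (q ++ [r]).Sublist p := by
  intro p q r hps hsub
  induction hsub with
  | slnil => intro hr _; simpa using hr
  | cons a h ih =>
      rename_i q' l
      intro hr hlt
      rcases List.mem_cons.1 hr with rfl | hr'
      · have hq' : q' = [] := by
          rcases q' with _ | ⟨x, t⟩
          · rfl
          · exfalso
            have hx : x ∈ l := h.subset List.mem_cons_self
            have : r < x := (List.pairwise_cons.1 hps).1 x hx
            have : x < r := hlt x List.mem_cons_self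
            omega
        subst hq'
        simpa using List.Sublist.cons₂ r (List.nil_sublist l)
      · exact List.Sublist.cons a (ih (List.pairwise_cons.1 hps).2 hr' hlt)
  | cons_cons a h ih =>
      rename_i q' l
      intro hr hlt
      have ha : a < r := hlt a List.mem_cons_self
      have hr' : r ∈ l := by
        rcases List.mem_cons.1 hr with rfl | hr' <;> [omega; exact hr']
      exact List.Sublist.cons₂ a
        (ih (List.pairwise_cons.1 hps).2 hr' (fun x hx => hlt x (List.mem_cons_of_mem a hx)))

theorem cycle_append_right (n : ℕ) (hn : 3 ≤ n) (w : ℕ → ℕ)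
    (p q : List ℕ) (r : ℕ) (hq : q ≠ [])
    (hps : p.Pairwise (· < ·))
    (hrange : ∀ x ∈ p, 1 ≤ x ∧ x ≤ n)
    (hsub : q.Sublist p)
    (hchain : q.Chain' (fun a b => b - a ≠ 2))
    (hdot : q.getLast hq - q.head hq ≠ n - 2)
    (hr : r ∈ p) (hr1 : q.getLast hq < r) (hr2 : r - q.getLast hq ≠ 2)
    (hr3 : r - q.head hq ≠ n - 2)
    (hw : ∀ v ∈ p, 2 ≤ w v) :
    (q ++ [r]).Sublist p ∧
    (q ++ [r]).Chain' (fun a b => b - a ≠ 2) ∧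
    r - q.head hq ≠ n - 2 ∧
    wps w q + (((n + q.head hq - q.getLast hq) / 3 : ℕ) : ℤ) ≤
      wps w (q ++ [r]) + (((n + q.head hq - r) / 3 : ℕ) : ℤ) := by
  have hqsorted : q.Pairwise (· < ·) := hps.sublist hsub
  have hlt : ∀ x ∈ q, x < r := by
    intro x hx
    have := le_getLast_of_sorted hq hqsorted x hx
    omega
  refine ⟨sublist_append_last hps hsub hr hlt, ?_, hr3, ?_⟩
  · show List.IsChain _ (q ++ [r])
    rw [List.isChain_append]
    refine ⟨hchain, List.isChain_singleton r, ?_⟩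
    intro x hx y hy
    simp at hy
    subst hy
    rw [List.getLast?_eq_getLast hq] at hx
    simp at hx
    subst hx
    exact hr2
  · rw [wps_append_right w r q hq]
    have hhead : q.head hq ≤ q.getLast hq :=
      le_getLast_of_sorted hq hqsorted _ (List.head_mem hq)
    have hrn : r ≤ n := (hrange r hr).2
    have hwr : 2 ≤ w r := hw r hr
    have h1 : 1 ≤ q.head hq := (hrange _ (hsub.subset (List.head_mem hq))).1
    omega
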